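/- arXiv:0805.1738 — 4 statements merged into one kernel-verified Lean document; each statement's English description precedes it below -/
import Mathlib

section
/- Let S be an r-element subset of the group of (r+l)-th roots of unity and T its complement (an l-element set). Then for any Young diagram λ in an l × r rectangle, S_λ(u : u ∈ S) = (-1)^{|λ|} · S_{λ^T}(v : v ∈ T), where S_λ denotes the Schur polynomial associated to λ evaluated at the given multiset of roots of unity. -/
/-- The Schur polynomial `S_λ(x_1,...,x_r) = det(x_i^{λ_j + r - j}) / det(x_i^{r-j})`
evaluated at complex numbers (indices `0`-based via `Fin r`). -/
noncomputable def schurEval (r : ℕ) (lam : Fin r → ℕ) (x : Fin r → ℂ) : ℂ :=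
  (Matrix.det (fun i j : Fin r => x i ^ (lam j + (r - 1 - j.val)))) /
    (Matrix.det (fun i j : Fin r => x i ^ (r - 1 - j.val)))

/-- The transpose of a Young diagram in an `l × r` rectangle. -/
def ydT (r l : ℕ) (lam : Fin r → ℕ) : Fin l → ℕ :=
  fun j => (Finset.univ.filter (fun i : Fin r => j.val + 1 ≤ lam i)).card

/-!
The exponents `λ_j + r - 1 - j` (`j < r`) and `r + l - 1 - (λᵀ_k + l - 1 - k)` (`k < l`) are a
permutation of `0, …, r + l - 1`. Hence, if `z = (u, v)` lists all `(r + l)`-th roots of unity,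
`M = (z_p ^ e_c)` is a Fourier matrix with permuted columns, and its inverse is
`(z_p⁻¹ ^ e_c / (r + l))ᵀ`. Jacobi's complementary minor identity `det M₁₁ = det M · det (M⁻¹)₂₂`
then writes the alternant of `λ` at `u` as `det M · ∏ v / (r + l) ^ l` times the alternant of `λᵀ`
at `v`. Removing a box from `λ` swaps two columns of `M`, so `det M` is `(-1) ^ |λ|` times its
value at `λ = 0`, and dividing the identity for `λ` by the one for `λ = 0` gives the theorem.
-/

open Matrix Finset

section LinearAlgebra

variable {R K : Type*}

def powMatrix {ι κ : Type*} [Monoid R] (z : ι → R) (e : κ → ℕ) : Matrix ι κ R :=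
  of fun p c => z p ^ e c

theorem det_toBlocks₁₁_eq_det_mul_det_toBlocks₂₂ [CommRing R] {m n : Type*} [Fintype m]
    [Fintype n] [DecidableEq m] [DecidableEq n] {M N : Matrix (m ⊕ n) (m ⊕ n) R}
    (h : M * N = 1) : M.toBlocks₁₁.det = M.det * N.toBlocks₂₂.det := by
  have hcols : M * fromBlocks 1 N.toBlocks₁₂ 0 N.toBlocks₂₂ =
      fromBlocks M.toBlocks₁₁ 0 M.toBlocks₂₁ 1 := by
    ext p (j | j)
    · rcases p with p | p <;>
        simp [mul_apply, Fintype.sum_sum_type, toBlocks₁₁, toBlocks₂₁, one_apply]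
    · have hcol (q : m ⊕ n) : fromBlocks (1 : Matrix m m R) N.toBlocks₁₂ 0 N.toBlocks₂₂ q
          (Sum.inr j) = N q (Sum.inr j) := by
        rcases q with q | q <;> rfl
      rw [mul_apply, Finset.sum_congr rfl fun q _ => congrArg (M p q * ·) (hcol q), ← mul_apply, h]
      rcases p with p | p <;> simp [one_apply]
  simpa [det_fromBlocks_zero₂₁, det_fromBlocks_zero₁₂] using (congrArg det hcols).symm

theorem inv_pow_eq_pow_of_pow_add_eq_one {G : Type*} [DivisionMonoid G] {w : G} {a b : ℕ}
    (h : w ^ (a + b) = 1) : w⁻¹ ^ a = w ^ b := by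
  rw [inv_pow]
  exact inv_eq_of_mul_eq_one_left (by rw [← pow_add, add_comm, h])

theorem geom_sum_eq_zero_of_pow_eq_one [Field K] {N : ℕ} {w : K} (hw : w ^ N = 1)
    (hw1 : w ≠ 1) : ∑ q ∈ range N, w ^ q = 0 := by
  rw [geom_sum_eq hw1, hw, sub_self, zero_div]

theorem powMatrix_mul_eq_one [Field K] {ι κ : Type*} [Fintype κ] [DecidableEq ι] {N : ℕ}
    (hN : (N : K) ≠ 0) {z : ι → K} (hz : Function.Injective z) (hzN : ∀ p, z p ^ N = 1)
    (e : κ ≃ Fin N) :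
    powMatrix z (fun c => e c) * of (fun c p => (z p)⁻¹ ^ (e c : ℕ) / N) = 1 := by
  have hN0 : N ≠ 0 := fun h => hN (by simp [h])
  have hz0 (p : ι) : z p ≠ 0 := ne_zero_pow hN0 (by simp [hzN p])
  ext p p'
  have hsum : ∑ c, z p ^ (e c : ℕ) * (z p')⁻¹ ^ (e c : ℕ) =
      ∑ q ∈ range N, (z p / z p') ^ q := by
    rw [← Fin.sum_univ_eq_sum_range, ← e.sum_comp]
    simp [div_eq_mul_inv, mul_pow]
  simp only [mul_apply, powMatrix, of_apply, mul_div_assoc', ← sum_div, hsum]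
  by_cases hpp : p = p'
  · subst hpp
    simp [div_self (hz0 p), hN]
  · rw [geom_sum_eq_zero_of_pow_eq_one (by rw [div_pow, hzN, hzN, div_one])
      (by rwa [Ne, div_eq_one_iff_eq (hz0 p'), hz.eq_iff]), zero_div, one_apply_ne hpp]

end LinearAlgebra

section Exponents

variable {r l : ℕ} {lam : Fin r → ℕ}

def shiftedParts {n : ℕ} (lam : Fin n → ℕ) (j : Fin n) : ℕ := lam j + (n - 1 - j)

-- For `λ` inside the `r × l` box these are a permutation of `0, …, r + l - 1`
-- (Macdonald, *Symmetric functions and Hall polynomials*, I.(1.7)).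
def complementaryExps (l : ℕ) (lam : Fin r → ℕ) : Fin r ⊕ Fin l → ℕ :=
  Sum.elim (shiftedParts lam) fun k => r + l - 1 - shiftedParts (ydT r l lam) k

theorem shiftedParts_strictAnti {n : ℕ} {lam : Fin n → ℕ} (hlam : Antitone lam) :
    StrictAnti (shiftedParts lam) := fun i j hij => by
  have := hlam hij.le
  have : (i : ℕ) < j := hij
  unfold shiftedParts
  omega

theorem ydT_le (lam : Fin r → ℕ) (k : Fin l) : ydT r l lam k ≤ r :=
  (card_filter_le _ _).trans_eq (card_fin r)

theorem ydT_antitone (lam : Fin r → ℕ) : Antitone (ydT r l lam) := by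
  intro k k' hkk'
  apply card_le_card
  intro i
  simp only [mem_filter, mem_univ, true_and]
  have : (k : ℕ) ≤ k' := hkk'
  omega

theorem lt_ydT_iff (hlam : Antitone lam) (j : Fin r) (k : Fin l) :
    (j : ℕ) < ydT r l lam k ↔ (k : ℕ) < lam j := by
  refine ⟨fun hj => ?_, fun hkj => ?_⟩
  · by_contra! hjk
    have hsub : univ.filter (fun i : Fin r => (k : ℕ) + 1 ≤ lam i) ⊆ Iio j := fun i hi =>
      mem_Iio.2 <| lt_of_not_ge fun hji => by
        have := hlam hji
        simp only [mem_filter, mem_univ, true_and] at hi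
        omega
    exact hj.not_ge ((card_le_card hsub).trans_eq (Fin.card_Iio j))
  · have hsub : Iic j ⊆ univ.filter (fun i : Fin r => (k : ℕ) + 1 ≤ lam i) := fun i hi => by
      have := hlam (mem_Iic.1 hi)
      simp only [mem_filter, mem_univ, true_and]
      omega
    exact (Fin.card_Iic j).symm.trans_le (card_le_card hsub)

theorem complementaryExps_lt (hle : ∀ i, lam i ≤ l) (c : Fin r ⊕ Fin l) :
    complementaryExps l lam c < r + l := by
  rcases c with j | k
  · have := hle j
    have := j.isLt
    simp only [complementaryExps, Sum.elim_inl, shiftedParts]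
    omega
  · have := k.isLt
    simp only [complementaryExps, Sum.elim_inr]
    omega

theorem shiftedParts_ydT_le (lam : Fin r → ℕ) (k : Fin l) :
    shiftedParts (ydT r l lam) k ≤ r + l - 1 := by
  have := ydT_le lam k
  have := k.isLt
  unfold shiftedParts
  omega

theorem complementaryExps_injective (hlam : Antitone lam) :
    Function.Injective (complementaryExps l lam) := by
  have hcol := shiftedParts_ydT_le (l := l) lam
  refine (shiftedParts_strictAnti hlam).injective.sumElim (fun k k' h => ?_) fun j k h => ?_
  · have := hcol k
    have := hcol k'
    exact (shiftedParts_strictAnti (ydT_antitone lam)).injective (by omega)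
  · -- `h` says `λ_j + λᵀ_k = j + k + 1`, but this sum is at least `j + k + 2` if the box `(j, k)`
    -- lies in `λ` and at most `j + k` otherwise.
    have hin := lt_ydT_iff hlam j k
    have := hcol k
    have := j.isLt
    simp only [shiftedParts] at h this
    omega

noncomputable def complementaryExpsEquiv (hlam : Antitone lam) (hle : ∀ i, lam i ≤ l) :
    Fin r ⊕ Fin l ≃ Fin (r + l) :=
  Equiv.ofBijective (fun c => ⟨complementaryExps l lam c, complementaryExps_lt hle c⟩) <| by
    rw [Fintype.bijective_iff_injective_and_card]
    exact ⟨fun c c' h => complementaryExps_injective hlam (congrArg Fin.val h), by simp⟩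

section RemoveBox

variable {i : Fin r} {k : Fin l}

theorem exists_corner (h : ∃ i, 0 < lam i) : ∃ i, 0 < lam i ∧ ∀ i', i < i' → lam i' < lam i := by
  obtain ⟨i, hi, hmax⟩ := exists_max_image (univ.filter fun i => 0 < lam i) id
    (by simpa [Finset.Nonempty] using h)
  simp only [mem_filter, mem_univ, true_and, id] at hi hmax
  exact ⟨i, hi, fun i' hii' => by by_contra! h'; exact absurd (hmax i' (by omega)) (not_le.2 hii')⟩

theorem ydT_eq_of_corner (hlam : Antitone lam) (hk : (k : ℕ) + 1 = lam i)
    (hi : ∀ i', i < i' → lam i' < lam i) : ydT r l lam k = i + 1 := by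
  have : univ.filter (fun i' : Fin r => (k : ℕ) + 1 ≤ lam i') = Iic i := by
    ext i'
    simp only [mem_filter, mem_univ, true_and, mem_Iic, hk]
    exact ⟨fun h => le_of_not_gt fun h' => absurd (hi i' h') (not_lt.2 h), fun h => hlam h⟩
  rw [ydT, this, Fin.card_Iic]

theorem ydT_update_of_corner (hlam : Antitone lam) (hk : (k : ℕ) + 1 = lam i)
    (hi : ∀ i', i < i' → lam i' < lam i) :
    ydT r l (Function.update lam i (lam i - 1)) k = i := by
  have : univ.filter (fun i' : Fin r => (k : ℕ) + 1 ≤ Function.update lam i (lam i - 1) i') =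
      Iio i := by
    ext i'
    simp only [mem_filter, mem_univ, true_and, mem_Iio, hk]
    rcases eq_or_ne i' i with rfl | hne
    · simp only [Function.update_self, lt_self_iff_false, iff_false, not_le]
      omega
    · rw [Function.update_of_ne hne]
      exact ⟨fun h => lt_of_le_of_ne (le_of_not_gt fun h' => absurd (hi i' h') (not_lt.2 h)) hne,
        fun h => hlam h.le⟩
  rw [ydT, this, Fin.card_Iio]

theorem ydT_update_of_ne (hk : (k : ℕ) + 1 ≠ lam i) :
    ydT r l (Function.update lam i (lam i - 1)) k = ydT r l lam k := by
  refine congrArg card (filter_congr fun i' _ => ?_)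
  rcases eq_or_ne i' i with rfl | hne
  · simp only [Function.update_self]
    omega
  · rw [Function.update_of_ne hne]

theorem antitone_update_of_corner (hlam : Antitone lam) (hi : ∀ i', i < i' → lam i' < lam i) :
    Antitone (Function.update lam i (lam i - 1)) := by
  intro a b hab
  have := hlam hab
  simp only [Function.update_apply]
  split_ifs with hb ha ha
  · omega
  · subst hb
    omega
  · have := hi b (lt_of_le_of_ne (ha ▸ hab) (Ne.symm (ha ▸ hb)))
    omega
  · exact this

theorem complementaryExps_update_comp_swap (hlam : Antitone lam) (hk : (k : ℕ) + 1 = lam i)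
    (hi : ∀ i', i < i' → lam i' < lam i) :
    complementaryExps l (Function.update lam i (lam i - 1)) ∘
      Equiv.swap (Sum.inl i) (Sum.inr k) = complementaryExps l lam := by
  have hir := i.isLt
  have hkl := k.isLt
  funext c
  rcases c with j | k'
  · rcases eq_or_ne j i with rfl | hj
    · simp only [complementaryExps, shiftedParts, Function.comp_apply, Equiv.swap_apply_left,
        Sum.elim_inr, Sum.elim_inl, ydT_update_of_corner hlam hk hi]
      omega
    · rw [Function.comp_apply, Equiv.swap_apply_of_ne_of_ne (by simpa) (by simp)]
      simp [complementaryExps, shiftedParts, Function.update_of_ne hj]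
  · rcases eq_or_ne k' k with rfl | hk'
    · simp only [complementaryExps, shiftedParts, Function.comp_apply, Equiv.swap_apply_right,
        Sum.elim_inl, Sum.elim_inr, Function.update_self, ydT_eq_of_corner hlam hk hi]
      omega
    · rw [Function.comp_apply, Equiv.swap_apply_of_ne_of_ne (by simp) (by simpa)]
      have : (k' : ℕ) + 1 ≠ lam i := fun h => hk' (Fin.ext (by omega))
      simp [complementaryExps, shiftedParts, ydT_update_of_ne this]

end RemoveBox

end Exponents

theorem ydT_zero (r l : ℕ) : ydT r l (0 : Fin r → ℕ) = 0 := by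
  ext k
  simp [ydT]

theorem schurEval_eq_det_div_det (n : ℕ) (lam : Fin n → ℕ) (x : Fin n → ℂ) :
    schurEval n lam x =
      det (powMatrix x (shiftedParts lam)) / det (powMatrix x (shiftedParts 0)) := by
  simp only [schurEval, powMatrix, shiftedParts, Pi.zero_apply, zero_add]
  rfl

theorem det_powMatrix_complementaryExps {R : Type*} [CommRing R] {r l : ℕ} {lam : Fin r → ℕ}
    (z : Fin r ⊕ Fin l → R) (hlam : Antitone lam) (hle : ∀ i, lam i ≤ l) :
    det (powMatrix z (complementaryExps l lam)) =
      (-1) ^ (∑ i, lam i) * det (powMatrix z (complementaryExps l (0 : Fin r → ℕ))) := by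
  induction hn : ∑ i, lam i generalizing lam with
  | zero =>
    have : lam = 0 := funext fun i => sum_eq_zero_iff.1 hn i (mem_univ i)
    simp [this]
  | succ n ih =>
    obtain ⟨i, hpos, hi⟩ := exists_corner (lam := lam) <| by
      by_contra! h
      simp [fun j => Nat.eq_zero_of_le_zero (h j)] at hn
    let k : Fin l := ⟨lam i - 1, by have := hle i; omega⟩
    have hk : (k : ℕ) + 1 = lam i := Nat.sub_add_cancel hpos
    have hsum : ∑ j, Function.update lam i (lam i - 1) j = n := by
      rw [sum_update_of_mem (mem_univ i), ← Nat.add_right_cancel_iff (n := 1), ← hn,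
        sum_eq_add_sum_sdiff_singleton_of_mem (mem_univ i) lam]
      omega
    have hle' (j : Fin r) : Function.update lam i (lam i - 1) j ≤ l := by
      rw [Function.update_apply]
      split_ifs <;> have := hle j <;> omega
    rw [← complementaryExps_update_comp_swap hlam hk hi]
    calc det ((powMatrix z (complementaryExps l (Function.update lam i (lam i - 1)))).submatrix id
          (Equiv.swap (Sum.inl i) (Sum.inr k)))
        = -det (powMatrix z (complementaryExps l (Function.update lam i (lam i - 1)))) := by
          rw [det_permute', Equiv.Perm.sign_swap (by simp)]
          simp
      _ = _ := by
          rw [ih (antitone_update_of_corner hlam hi) hle' hsum]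
          ring

theorem det_powMatrix_shiftedParts_eq {K : Type*} [Field K] {r l : ℕ} {lam : Fin r → ℕ}
    (hN : ((r + l : ℕ) : K) ≠ 0) (hlam : Antitone lam) (hle : ∀ i, lam i ≤ l)
    {u : Fin r → K} {v : Fin l → K} (hz : Function.Injective (Sum.elim u v))
    (hzN : ∀ p, Sum.elim u v p ^ (r + l) = 1) :
    det (powMatrix u (shiftedParts lam)) =
      (∏ i, v i) / ((r + l : ℕ) : K) ^ l *
        det (powMatrix (Sum.elim u v) (complementaryExps l lam)) *
        det (powMatrix v (shiftedParts (ydT r l lam))) := by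
  have hinv : powMatrix (Sum.elim u v) (complementaryExps l lam) *
      of (fun c p => (Sum.elim u v p)⁻¹ ^ complementaryExps l lam c / ((r + l : ℕ) : K)) = 1 :=
    powMatrix_mul_eq_one hN hz hzN (complementaryExpsEquiv hlam hle)
  have h22 : (of fun c p => (Sum.elim u v p)⁻¹ ^ complementaryExps l lam c /
      ((r + l : ℕ) : K)).toBlocks₂₂ =
      ((r + l : ℕ) : K)⁻¹ • ((powMatrix v (shiftedParts (ydT r l lam)))ᵀ * diagonal v) := by
    ext k i
    have hpow : (v i)⁻¹ ^ (r + l - 1 - shiftedParts (ydT r l lam) k) =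
        v i ^ (shiftedParts (ydT r l lam) k + 1) := by
      have := shiftedParts_ydT_le lam k
      have := k.isLt
      refine inv_pow_eq_pow_of_pow_add_eq_one ?_
      rw [show r + l - 1 - shiftedParts (ydT r l lam) k + (shiftedParts (ydT r l lam) k + 1) =
        r + l by omega]
      exact hzN (Sum.inr i)
    simp only [toBlocks₂₂, of_apply, complementaryExps, Sum.elim_inr, hpow, Matrix.smul_apply,
      mul_diagonal, transpose_apply, powMatrix, smul_eq_mul]
    ring
  rw [show powMatrix u (shiftedParts lam) =
      (powMatrix (Sum.elim u v) (complementaryExps l lam)).toBlocks₁₁ from rfl,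
    det_toBlocks₁₁_eq_det_mul_det_toBlocks₂₂ hinv, h22, det_smul, det_mul, det_transpose,
    det_diagonal]
  simp only [Nat.cast_add, Fintype.card_fin, inv_pow]
  ring

theorem schur_rank_level_reciprocity_general (r l : ℕ)
    (lam : Fin r → ℕ) (hmono : ∀ i j : Fin r, i ≤ j → lam j ≤ lam i)
    (hle : ∀ i, lam i ≤ l)
    (u : Fin r → ℂ) (v : Fin l → ℂ)
    (hu : Function.Injective u) (hv : Function.Injective v)
    (hdisj : Disjoint (Set.range u) (Set.range v))
    (hcover : Set.range u ∪ Set.range v = {z : ℂ | z ^ (r + l) = 1}) :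
    schurEval r lam u = (-1) ^ (∑ i, lam i) * schurEval l (ydT r l lam) v := by
  have hrange : Set.range (Sum.elim u v) = {z : ℂ | z ^ (r + l) = 1} := by
    rw [Set.Sum.elim_range, hcover]
  have hzN (p : Fin r ⊕ Fin l) : Sum.elim u v p ^ (r + l) = 1 := hrange.subset ⟨p, rfl⟩
  have hpos : r + l ≠ 0 := by
    obtain ⟨p, -⟩ : (1 : ℂ) ∈ Set.range (Sum.elim u v) := hrange ▸ one_pow (r + l)
    simpa using (Fintype.card_pos_iff.2 ⟨p⟩).ne'
  have hN : ((r + l : ℕ) : ℂ) ≠ 0 := Nat.cast_ne_zero.2 hpos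
  have hz : Function.Injective (Sum.elim u v) :=
    hu.sumElim hv fun i k h => Set.disjoint_left.1 hdisj ⟨i, rfl⟩ ⟨k, h.symm⟩
  have hlam : Antitone lam := fun i j h => hmono i j h
  have hdet0 : det (powMatrix (Sum.elim u v) (complementaryExps l (0 : Fin r → ℕ))) ≠ 0 :=
    det_ne_zero_of_right_inverse <| powMatrix_mul_eq_one hN hz hzN <|
      complementaryExpsEquiv (lam := 0) antitone_const fun _ => l.zero_le
  have hprod : ∏ i, v i ≠ 0 :=
    prod_ne_zero_iff.2 fun i _ => ne_zero_pow hpos ((hzN (Sum.inr i)).symm ▸ one_ne_zero)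
  rw [schurEval_eq_det_div_det, schurEval_eq_det_div_det,
    det_powMatrix_shiftedParts_eq hN hlam hle hz hzN,
    det_powMatrix_shiftedParts_eq (lam := 0) hN antitone_const (fun _ => l.zero_le) hz hzN,
    ydT_zero, det_powMatrix_complementaryExps _ hlam hle]
  field_simp

/-- Rank-level reciprocity for Schur polynomials at roots of unity: if `S` is an
`r`-element set of `(r+l)`-th roots of unity and `T` its complement, then for any
Young diagram `λ` in an `l × r` rectangle,
`S_λ(u : u ∈ S) = (-1)^{|λ|} · S_{λᵀ}(v : v ∈ T)`. -/
theorem schur_rank_level_reciprocity (r l : ℕ) (hr : 0 < r) (hl : 0 < l)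
    (lam : Fin r → ℕ) (hmono : ∀ i j : Fin r, i ≤ j → lam j ≤ lam i)
    (hle : ∀ i, lam i ≤ l)
    (u : Fin r → ℂ) (v : Fin l → ℂ)
    (hu : Function.Injective u) (hv : Function.Injective v)
    (hdisj : Disjoint (Set.range u) (Set.range v))
    (hcover : Set.range u ∪ Set.range v = {z : ℂ | z ^ (r + l) = 1}) :
    schurEval r lam u = (-1) ^ (∑ i, lam i) * schurEval l (ydT r l lam) v :=
  schur_rank_level_reciprocity_general r l lam hmono hle u v hu hv hdisj hcover
end

section
/- Let ζ be a primitive (r+l)-th root of unity and S an r-element subset of Z/(r+l)Z with complement T. Then |Vdm(ζ^s : s ∈ S)|^2 = (r+l)^r / ∏_{s ∈ S, t ∈ T} |ζ^s - ζ^t|, where Vdm denotes the Vandermonde determinant ∏_{s < s'} (ζ^s - ζ^{s'}). -/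
/-!
Put `n = r + l`. The nodes `ζ ^ j`, `j ∈ ℤ/nℤ`, are all the roots of `X ^ n - 1`, so for each
node `ζ ^ s` the product `∏_{j ≠ s} (ζ ^ s - ζ ^ j)` is the derivative `n X ^ (n - 1)` evaluated
at `ζ ^ s`, which has absolute value `n`. Splitting `j ≠ s` into `j ∈ S \ {s}` and `j ∈ T` and
multiplying over `s ∈ S` gives `|Vdm(ζ ^ S)|² · ∏_{s ∈ S, t ∈ T} |ζ ^ s - ζ ^ t| = n ^ r`.
-/

open Polynomial Finset Lagrange

namespace IsPrimitiveRoot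

section CommRing

variable {R : Type*} [CommRing R] [IsDomain R] {n : ℕ} [NeZero n] {ζ : R}

theorem nodal_univ_pow_eq_X_pow_sub_one (hζ : IsPrimitiveRoot ζ n) :
    nodal univ (fun j : Fin n => ζ ^ (j : ℕ)) = X ^ n - 1 := by
  rw [X_pow_sub_one_eq_prod (NeZero.pos n) hζ, nodal_eq]
  refine prod_nbij (fun j => ζ ^ (j : ℕ)) (fun j _ => ?_) (fun i _ j _ h => ?_) (fun x hx => ?_)
    (fun _ _ => rfl)
  · rw [Polynomial.mem_nthRootsFinset (NeZero.pos n), pow_right_comm, hζ.pow_eq_one, one_pow]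
  · exact Fin.ext (hζ.pow_inj i.isLt j.isLt h)
  · rw [mem_coe, Polynomial.mem_nthRootsFinset (NeZero.pos n)] at hx
    obtain ⟨i, hi, rfl⟩ := hζ.eq_pow_of_pow_eq_one hx
    exact ⟨⟨i, hi⟩, mem_coe.2 (mem_univ _), rfl⟩

theorem prod_univ_erase_pow_sub_pow (hζ : IsPrimitiveRoot ζ n) (i : Fin n) :
    ∏ j ∈ univ.erase i, (ζ ^ (i : ℕ) - ζ ^ (j : ℕ)) = n * (ζ ^ (i : ℕ)) ^ (n - 1) := by
  let v : Fin n → R := fun j => ζ ^ (j : ℕ)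
  calc ∏ j ∈ univ.erase i, (ζ ^ (i : ℕ) - ζ ^ (j : ℕ))
      = (nodal (univ.erase i) v).eval (v i) := eval_nodal.symm
    _ = (derivative (nodal univ v)).eval (v i) :=
      (eval_nodal_derivative_eval_node_eq (mem_univ i)).symm
    _ = n * (ζ ^ (i : ℕ)) ^ (n - 1) := by
      simp [v, hζ.nodal_univ_pow_eq_X_pow_sub_one, derivative_X_pow]

end CommRing

theorem prod_univ_erase_norm_pow_sub_pow {n : ℕ} [NeZero n] {ζ : ℂ}
    (hζ : IsPrimitiveRoot ζ n) (i : Fin n) :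
    ∏ j ∈ univ.erase i, ‖ζ ^ (i : ℕ) - ζ ^ (j : ℕ)‖ = n := by
  rw [← norm_prod, hζ.prod_univ_erase_pow_sub_pow, norm_mul, norm_pow, norm_pow,
    hζ.norm'_eq_one (NeZero.ne n)]
  simp

end IsPrimitiveRoot

theorem Finset.prod_erase_mul_prod_compl {ι M : Type*} [Fintype ι] [DecidableEq ι]
    [CommMonoid M] {S : Finset ι} {s : ι} (hs : s ∈ S) (f : ι → M) :
    (∏ x ∈ S.erase s, f x) * ∏ x ∈ Sᶜ, f x = ∏ x ∈ univ.erase s, f x := by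
  rw [← union_compl S, erase_union_distrib, erase_eq_of_notMem (notMem_compl.2 hs),
    prod_union (disjoint_compl_right.mono_left (erase_subset s S))]

theorem vandermonde_abs_sq_roots_of_unity_general (r l : ℕ) (hr : 0 < r)
    (S : Finset (Fin (r + l))) (hS : S.card = r) :
    let ζ : ℂ := Complex.exp (2 * Real.pi * Complex.I / (r + l))
    (∏ s ∈ S, ∏ s' ∈ S.erase s, ‖ζ ^ s.val - ζ ^ s'.val‖) =
      ((r + l : ℝ)) ^ r /
        ∏ s ∈ S, ∏ t ∈ Sᶜ, ‖ζ ^ s.val - ζ ^ t.val‖ := by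
  intro ζ
  have : NeZero (r + l) := ⟨by omega⟩
  have hζ : IsPrimitiveRoot ζ (r + l) := by
    simpa using Complex.isPrimitiveRoot_exp (r + l) (NeZero.ne _)
  have hT : ∏ s ∈ S, ∏ t ∈ Sᶜ, ‖ζ ^ s.val - ζ ^ t.val‖ ≠ 0 :=
    prod_ne_zero_iff.2 fun s hs => prod_ne_zero_iff.2 fun t ht =>
      norm_ne_zero_iff.2 <| sub_ne_zero.2 fun h =>
        (mem_compl.1 ht) (Fin.ext (hζ.pow_inj s.isLt t.isLt h) ▸ hs)
  rw [eq_div_iff hT, ← prod_mul_distrib, prod_congr rfl fun s hs => by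
      rw [prod_erase_mul_prod_compl hs, hζ.prod_univ_erase_norm_pow_sub_pow],
    prod_const, hS, Nat.cast_add]

/-- For `ζ` a primitive `(r+l)`-th root of unity and `S ⊆ ℤ/(r+l)ℤ` of size `r`
with complement `T`: `|Vdm(ζ^s : s ∈ S)|² = (r+l)^r / ∏_{s ∈ S, t ∈ T} |ζ^s - ζ^t|`,
where `|Vdm(x_1,...,x_r)|² = ∏_{i ≠ j} |x_i - x_j|`. -/
theorem vandermonde_abs_sq_roots_of_unity (r l : ℕ) (hr : 0 < r) (hl : 0 < l)
    (S : Finset (Fin (r + l))) (hS : S.card = r) :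
    let ζ : ℂ := Complex.exp (2 * Real.pi * Complex.I / (r + l))
    (∏ s ∈ S, ∏ s' ∈ S.erase s, ‖ζ ^ s.val - ζ ^ s'.val‖) =
      ((r + l : ℝ)) ^ r /
        ∏ s ∈ S, ∏ t ∈ Sᶜ, ‖ζ ^ s.val - ζ ^ t.val‖ :=
  vandermonde_abs_sq_roots_of_unity_general r l hr S hS
end

section
/- Let ζ be a primitive N-th root of unity, N = r+1, and S = Z/NZ \ {s} for some s. Then the k-th elementary symmetric polynomial evaluated at (ζ^σ : σ ∈ S) equals (-1)^k ζ^{sk}, for 0 ≤ k ≤ r. -/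
/-!
The values `ζ ^ σ`, `σ ∈ ZMod (r + 1)`, are the roots of `X ^ (r + 1) - 1`, so by Vieta all their
elementary symmetric functions of degree `0 < k < r + 1` vanish. Removing the root `a = ζ ^ s`
turns this into the recursion `e_{k+1}(S) + a e_k(S) = 0`, whence `e_k(S) = (-a) ^ k`.
-/

open Polynomial Finset

namespace Multiset

variable {R : Type*}

theorem esymm_cons_succ [CommSemiring R] (a : R) (s : Multiset R) (k : ℕ) :
    (a ::ₘ s).esymm (k + 1) = s.esymm (k + 1) + a * s.esymm k := by
  simp [esymm, powersetCard_cons, map_map, prod_cons, sum_map_mul_left]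

theorem esymm_eq_neg_pow_of_esymm_cons_eq_zero [CommRing R] {a : R} {s : Multiset R}
    (h : ∀ k, 0 < k → k ≤ card s → (a ::ₘ s).esymm k = 0) {k : ℕ} (hk : k ≤ card s) :
    s.esymm k = (-a) ^ k := by
  induction k with
  | zero => simp [esymm]
  | succ k ih =>
    have hcons := h (k + 1) k.succ_pos hk
    rw [esymm_cons_succ, ih (by omega)] at hcons
    linear_combination hcons

end Multiset

namespace IsPrimitiveRoot

variable {R : Type*} [CommRing R] [IsDomain R] {ζ : R} {n : ℕ}

theorem univ_val_map_pow_eq_nthRoots_one (h : IsPrimitiveRoot ζ n) :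
    (univ : Finset (Fin n)).val.map (fun σ => ζ ^ σ.val) = nthRoots n 1 := by
  rw [h.nthRoots_eq (one_pow n), Fin.univ_val_map, List.ofFn_eq_map, Multiset.range,
    Multiset.map_coe, ← List.map_coe_finRange_eq_range, List.map_map]
  simp only [mul_one]
  rfl

theorem esymm_nthRoots_one_eq_zero (h : IsPrimitiveRoot ζ n) {k : ℕ} (hk0 : 0 < k)
    (hkn : k < n) : (nthRoots n (1 : R)).esymm k = 0 := by
  have hdeg : (X ^ n - C 1 : R[X]).natDegree = n := natDegree_X_pow_sub_C
  have hcard : Multiset.card (X ^ n - C 1 : R[X]).roots = (X ^ n - C 1 : R[X]).natDegree := by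
    rw [hdeg]; exact h.card_nthRoots_one
  have hvieta := coeff_eq_esymm_roots_of_card hcard (k := n - k) (by omega)
  rw [hdeg, Nat.sub_sub_self hkn.le, leadingCoeff_X_pow_sub_C (by omega)] at hvieta
  have hcoeff : (X ^ n - C 1 : R[X]).coeff (n - k) = 0 := by
    rw [coeff_sub, coeff_X_pow, coeff_C, if_neg (by omega), if_neg (by omega), sub_zero]
  rw [hcoeff, one_mul, eq_comm] at hvieta
  exact (mul_eq_zero.1 hvieta).resolve_left (pow_ne_zero _ (neg_ne_zero.2 one_ne_zero))

theorem sum_powersetCard_erase_prod_pow (h : IsPrimitiveRoot ζ n) (s : Fin n) {k : ℕ}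
    (hk : k < n) :
    ∑ A ∈ powersetCard k (univ.erase s), ∏ σ ∈ A, ζ ^ σ.val = (-1) ^ k * ζ ^ (s.val * k) := by
  set f : Fin n → R := fun σ => ζ ^ σ.val
  have hcons : f s ::ₘ (univ.erase s).val.map f = nthRoots n 1 := by
    rw [← Multiset.map_cons, erase_val, Multiset.cons_erase (mem_univ s)]
    exact h.univ_val_map_pow_eq_nthRoots_one
  have hcard : Multiset.card ((univ.erase s).val.map f) = n - 1 := by simp
  rw [← esymm_map_val, Multiset.esymm_eq_neg_pow_of_esymm_cons_eq_zero (a := f s) _ (by omega),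
    neg_pow, ← pow_mul]
  intro j hj0 hj
  rw [hcons]
  exact h.esymm_nthRoots_one_eq_zero hj0 (by omega)

end IsPrimitiveRoot

theorem esymm_roots_of_unity_erase_general (r : ℕ) (s : Fin (r + 1))
    (k : ℕ) (hk : k ≤ r) :
    let ζ : ℂ := Complex.exp (2 * Real.pi * Complex.I / (r + 1))
    (∑ A ∈ Finset.powersetCard k (Finset.univ.erase s),
        ∏ σ ∈ A, ζ ^ σ.val) = (-1 : ℂ) ^ k * ζ ^ (s.val * k) := by
  intro ζ
  have hζ : IsPrimitiveRoot ζ (r + 1) := by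
    convert Complex.isPrimitiveRoot_exp (r + 1) r.succ_ne_zero using 3
    push_cast
    ring
  exact hζ.sum_powersetCard_erase_prod_pow s (Nat.lt_succ_of_le hk)

/-- Let `ζ = exp(2πi/(r+1))` and `S = ℤ/(r+1)ℤ \ {s}`. Then the `k`-th
elementary symmetric polynomial evaluated at `(ζ^σ : σ ∈ S)` equals
`(-1)^k ζ^{sk}`, for `0 ≤ k ≤ r`. -/
theorem esymm_roots_of_unity_erase (r : ℕ) (hr : 0 < r) (s : Fin (r + 1))
    (k : ℕ) (hk : k ≤ r) :
    let ζ : ℂ := Complex.exp (2 * Real.pi * Complex.I / (r + 1))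
    (∑ A ∈ Finset.powersetCard k (Finset.univ.erase s),
        ∏ σ ∈ A, ζ ^ σ.val) = (-1 : ℂ) ^ k * ζ ^ (s.val * k) :=
  esymm_roots_of_unity_erase_general r s k hk
end

section
/- If S and T are complementary subsets of Z/(r+l)Z with |S| = r, |T| = l, and m is a positive integer divisible by rl, then (∏_{s∈S} ζ^s)^{−m/r} = (−1)^m (∏_{t∈T} ζ^t)^{−m/l}, where ζ is a primitive (r+l)-th root of unity. -/
/-!
Put `n = r + l`, `P = ∏_{s ∈ S} ζ^s`, `Q = ∏_{t ∈ T} ζ^t` and `m = r l c`. Both `P` and `Q` are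
`n`-th roots of unity, and `P Q` is the product of all `n`-th roots of unity, which is `(-1)^(n+1)`
(read off from the constant term of `X^n - 1`). Hence `P^(-l c) = P^(r c)`, and
`P^(r c) Q^(r c) = (-1)^((n+1) r c) = (-1)^(r l c)` because `r (r + 1)` is even.
-/

open Finset Polynomial

namespace IsPrimitiveRoot

theorem prod_pow_pow_eq_one {M ι : Type*} [CommMonoid M] {μ : M} {n : ℕ}
    (hμ : IsPrimitiveRoot μ n) (s : Finset ι) (f : ι → ℕ) : (∏ i ∈ s, μ ^ f i) ^ n = 1 := by
  rw [prod_pow_eq_pow_sum, pow_right_comm, hμ.pow_eq_one, one_pow]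

variable {R : Type*} [CommRing R] [IsDomain R] {μ : R} {n : ℕ}

theorem prod_range_pow (hμ : IsPrimitiveRoot μ n) (hn : 0 < n) :
    ∏ i ∈ range n, μ ^ i = (-1) ^ (n + 1) := by
  have h := congrArg (eval 0) (X_pow_sub_C_eq_prod hμ hn (one_pow n))
  simp only [eval_sub, eval_pow, eval_X, eval_C, zero_pow hn.ne', eval_prod, mul_one, zero_sub,
    prod_neg, card_range] at h
  calc ∏ i ∈ range n, μ ^ i = (-1) ^ n * ((-1) ^ n * ∏ i ∈ range n, μ ^ i) := by
        rw [← mul_assoc, ← mul_pow, neg_one_mul, neg_neg, one_pow, one_mul]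
    _ = (-1) ^ (n + 1) := by rw [← h, pow_succ]

theorem prod_pow_mul_prod_compl_pow (hμ : IsPrimitiveRoot μ n) (hn : 0 < n)
    (S : Finset (Fin n)) :
    (∏ s ∈ S, μ ^ (s : ℕ)) * ∏ t ∈ Sᶜ, μ ^ (t : ℕ) = (-1) ^ (n + 1) := by
  rw [prod_mul_prod_compl, Fin.prod_univ_eq_prod_range (μ ^ ·), hμ.prod_range_pow hn]

end IsPrimitiveRoot

theorem zpow_neg_eq_neg_one_pow_mul_zpow_neg {K : Type*} [Field K] {x y : K} {r l : ℕ}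
    (hx : x ^ (r + l) = 1) (hxy : x * y = (-1) ^ (r + l + 1)) (c : ℕ) :
    x ^ (-((l * c : ℕ) : ℤ)) = (-1) ^ (r * l * c) * y ^ (-((r * c : ℕ) : ℤ)) := by
  have hy : y ≠ 0 := right_ne_zero_of_mul (hxy ▸ pow_ne_zero _ (neg_ne_zero.2 one_ne_zero))
  have hx_inv : x ^ (r * c) * x ^ (l * c) = 1 := by
    rw [← pow_add, ← add_mul, pow_mul, hx, one_pow]
  have hxy_pow : x ^ (r * c) * y ^ (r * c) = (-1) ^ (r * l * c) := by
    rw [← mul_pow, hxy, ← pow_mul,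
      show (r + l + 1) * (r * c) = r * l * c + r * (r + 1) * c by ring, pow_add,
      ((Nat.even_mul_succ_self r).mul_right c).neg_one_pow, mul_one]
  rw [zpow_neg, zpow_neg, zpow_natCast, zpow_natCast, ← eq_inv_of_mul_eq_one_left hx_inv,
    ← hxy_pow, mul_inv_cancel_right₀ (pow_ne_zero _ hy)]

theorem prod_zeta_pow_symmetry_general (r l m : ℕ) (hr : 0 < r) (hl : 0 < l)
    (hdvd : r * l ∣ m)
    (S : Finset (Fin (r + l))) :
    let ζ : ℂ := Complex.exp (2 * Real.pi * Complex.I / (r + l))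
    (∏ s ∈ S, ζ ^ s.val) ^ (-(m / r : ℤ)) =
      (-1 : ℂ) ^ m * (∏ t ∈ Sᶜ, ζ ^ t.val) ^ (-(m / l : ℤ)) := by
  intro ζ
  obtain ⟨c, rfl⟩ := hdvd
  have hζ : IsPrimitiveRoot ζ (r + l) := by
    simpa using Complex.isPrimitiveRoot_exp (r + l) (by omega)
  have hdiv_r : ((r * l * c : ℕ) : ℤ) / r = (l * c : ℕ) := by
    push_cast
    rw [mul_assoc, Int.mul_ediv_cancel_left _ (by exact_mod_cast hr.ne')]
  have hdiv_l : ((r * l * c : ℕ) : ℤ) / l = (r * c : ℕ) := by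
    push_cast
    rw [mul_comm (r : ℤ), mul_assoc, Int.mul_ediv_cancel_left _ (by exact_mod_cast hl.ne')]
  rw [hdiv_r, hdiv_l]
  exact zpow_neg_eq_neg_one_pow_mul_zpow_neg (hζ.prod_pow_pow_eq_one S _)
    (hζ.prod_pow_mul_prod_compl_pow (by omega) S) c

/-- If `S` and `T = Sᶜ` are complementary subsets of `ℤ/(r+l)ℤ` with `|S| = r`,
and `rl ∣ m`, then `(∏_{s∈S} ζ^s)^{−m/r} = (−1)^m (∏_{t∈T} ζ^t)^{−m/l}` where
`ζ = exp(2πi/(r+l))`. -/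
theorem prod_zeta_pow_symmetry (r l m : ℕ) (hr : 0 < r) (hl : 0 < l)
    (hm : 0 < m) (hdvd : r * l ∣ m)
    (S : Finset (Fin (r + l))) (hS : S.card = r) :
    let ζ : ℂ := Complex.exp (2 * Real.pi * Complex.I / (r + l))
    (∏ s ∈ S, ζ ^ s.val) ^ (-(m / r : ℤ)) =
      (-1 : ℂ) ^ m * (∏ t ∈ Sᶜ, ζ ^ t.val) ^ (-(m / l : ℤ)) :=
  prod_zeta_pow_symmetry_general r l m hr hl hdvd S
end
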